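/- The population bias of the AIPW mediation functional at estimated nuisances is exactly a sum of products of nuisance errors: Ψ(π̂, b̂, ξ̂) − ψ = E[ 1{A = a} / π̂₀(W) · (r̂(M, W) − r(M, W)) · (b(M, W) − b̂(M, W)) ] + E[ (1{A = a} / π̂₀(W) − 1{A = a} / π_A(a | W)) · r(M, W) · (b(M, W) − b̂(M, W)) ] + E[ (1{A = a'} / π̂₁(W) − 1{A = a'} / π_A(a' | W)) · (κ_b̂(W) − ξ̂(W)) ]. (Exact second-order remainder identity underlying Theorem 2 and Corollary 1; each term is a product of an error in the propensity-type component and an error in the outcome-regression-type component.) -/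

import Mathlib

open MeasureTheory ProbabilityTheory Finset

/-!
Conditioning on the finitely many cells `{A = α, M = m, W = w}` turns every expectation into a
finite sum against the cell masses `p(α, m, w) = P(A = α, M = m, W = w)`, and since `Y` enters the
AIPW integrand affinely it may be replaced by its cell means, which are `b` on the cells with
`A = a`. Within a stratum `W = w` the identity then reduces to three population facts: the
density-ratio identity `p(a, m, w) r(m, w) / π_A(a | w) = p(a', m, w) / π_A(a' | w)`, inverse
propensity weighting `∑ₘ p(a', m, w) / π_A(a' | w) = P(W = w)`, and `ξ`, `κ` being the
`P(M | A = a', W = w)`-means of `b`, `b̂`.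
-/

/- `q i`, `q' i` are the masses of the cells `(a, i)`, `(a', i)` of a stratum of mass `n`;
`c₀`, `c₁` are estimated and `d₀`, `d₁` true inverse propensities. -/
theorem remainder_eq_of_moment_identities {ι : Type*} (s : Finset ι) (q q' b bh r rh : ι → ℝ)
    (c₀ c₁ d₀ d₁ n ξ ξh κ : ℝ)
    (hr : ∀ i ∈ s, q i * d₀ * r i = q' i * d₁)
    (hξ : ∑ i ∈ s, q' i * b i = (∑ i ∈ s, q' i) * ξ)
    (hκ : ∑ i ∈ s, q' i * bh i = (∑ i ∈ s, q' i) * κ)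
    (hn : (∑ i ∈ s, q' i) * d₁ = n) :
    ∑ i ∈ s, q i * (c₀ * rh i * (b i - bh i)) + ∑ i ∈ s, q' i * (c₁ * (bh i - ξh))
        + n * ξh - n * ξ
      = ∑ i ∈ s, q i * (c₀ * (rh i - r i) * (b i - bh i))
        + ∑ i ∈ s, q i * ((c₀ - d₀) * r i * (b i - bh i))
        + ∑ i ∈ s, q' i * ((c₁ - d₁) * (κ - ξh)) := by
  have hratio : ∑ i ∈ s, q i * (c₀ * (rh i - r i) * (b i - bh i))
        + ∑ i ∈ s, q i * ((c₀ - d₀) * r i * (b i - bh i))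
      = ∑ i ∈ s, q i * (c₀ * rh i * (b i - bh i))
        - d₁ * (∑ i ∈ s, q' i * b i - ∑ i ∈ s, q' i * bh i) := by
    rw [← sum_add_distrib, ← sum_sub_distrib, mul_sum, ← sum_sub_distrib]
    exact sum_congr rfl fun i hi => by linear_combination (bh i - b i) * hr i hi
  have hc₁ : ∑ i ∈ s, q' i * (c₁ * (bh i - ξh))
      = c₁ * (∑ i ∈ s, q' i * bh i - (∑ i ∈ s, q' i) * ξh) := by
    rw [sum_mul, ← sum_sub_distrib, mul_sum]
    exact sum_congr rfl fun i _ => by ring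
  have hd : ∑ i ∈ s, q' i * ((c₁ - d₁) * (κ - ξh)) = (c₁ - d₁) * (κ - ξh) * ∑ i ∈ s, q' i := by
    rw [mul_sum]
    exact sum_congr rfl fun i _ => by ring
  rw [hratio, hc₁, hd, hξ, hκ, ← hn]
  ring

theorem stratum_remainder_identity {𝔸 𝕄 : Type*} [Fintype 𝔸] [DecidableEq 𝔸] [Fintype 𝕄]
    [Nonempty 𝕄] (p : 𝔸 → 𝕄 → ℝ) (hp : ∀ α m, 0 < p α m) (a a' : 𝔸) (β : 𝔸 → 𝕄 → ℝ)
    (b bh r rh : 𝕄 → ℝ) (πA : 𝔸 → ℝ) (πAM : 𝔸 → 𝕄 → ℝ) (c₀ c₁ ξ ξh κ : ℝ)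
    (hβ : ∀ m, β a m = b m)
    (hπA : ∀ α, πA α = (∑ m, p α m) / ∑ m, ∑ α, p α m)
    (hπAM : ∀ α m, πAM α m = p α m / ∑ α, p α m)
    (hr : ∀ m, r m = πAM a' m * πA a / (πAM a m * πA a'))
    (hξ : ξ = ∑ m, b m * (p a' m / ∑ m, p a' m))
    (hκ : κ = ∑ m, bh m * (p a' m / ∑ m, p a' m)) :
    ∑ m, ∑ α, p α m * ((if α = a then 1 else 0) / c₀ * rh m * (β α m - bh m)
        + (if α = a' then 1 else 0) / c₁ * (bh m - ξh) + ξh)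
      - (∑ m, ∑ α, p α m) * ξ
    = ∑ m, ∑ α, p α m * ((if α = a then 1 else 0) / c₀ * (rh m - r m) * (b m - bh m))
      + ∑ m, ∑ α, p α m * (((if α = a then 1 else 0) / c₀ - (if α = a then 1 else 0) / πA a)
          * r m * (b m - bh m))
      + ∑ m, ∑ α, p α m * (((if α = a' then 1 else 0) / c₁ - (if α = a' then 1 else 0) / πA a')
          * (κ - ξh)) := by
  have hpA : ∀ α, 0 < ∑ m, p α m := fun α => sum_pos (fun m _ => hp α m) univ_nonempty
  have hpM : ∀ m, 0 < ∑ α, p α m := fun m => sum_pos (fun α _ => hp α m) ⟨a, mem_univ a⟩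
  have hn : 0 < ∑ m, ∑ α, p α m := sum_pos (fun m _ => hpM m) univ_nonempty
  have hmean : ∀ f : 𝕄 → ℝ,
      ∑ m, p a' m * f m = (∑ m, p a' m) * ∑ m, f m * (p a' m / ∑ m, p a' m) := fun f => by
    rw [mul_sum]
    exact sum_congr rfl fun m _ => by field_simp [(hpA a').ne']
  simp only [ite_div, one_div, zero_div, ite_mul, zero_mul, mul_ite, mul_zero, ite_sub_ite,
    sub_self, mul_add, sum_add_distrib, sum_ite_eq', mem_univ, if_true, hβ]
  rw [show ∑ m, ∑ α, p α m * ξh = (∑ m, ∑ α, p α m) * ξh by simp only [sum_mul]]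
  refine remainder_eq_of_moment_identities univ (p a) (p a') b bh r rh _ _ _ _ _ ξ ξh κ
    (fun m _ => ?_) (by rw [hξ, hmean]) (by rw [hκ, hmean]) ?_
  · rw [hr, hπAM, hπAM, hπA, hπA]
    field_simp [(hp a m).ne', (hpM m).ne', (hpA a).ne', (hpA a').ne', hn.ne']
  · rw [hπA]
    field_simp [(hpA a').ne', hn.ne']

section FiniteValued

variable {Ω : Type*} [MeasurableSpace Ω] (P : Measure Ω)

theorem setIntegral_eq_measureReal_mul_integral_cond [IsFiniteMeasure P] (Y : Ω → ℝ)
    (s : Set Ω) : ∫ ω in s, Y ω ∂P = P.real s * ∫ ω, Y ω ∂P[|s] := by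
  rw [ProbabilityTheory.cond, integral_smul_measure, smul_eq_mul, ← mul_assoc,
    ENNReal.toReal_inv, ← measureReal_def]
  rcases eq_or_ne (P.real s) 0 with hs | hs
  · rw [Measure.restrict_eq_zero.mpr ((measureReal_eq_zero_iff).mp hs), integral_zero_measure,
      mul_zero]
  · rw [mul_inv_cancel₀ hs, one_mul]

theorem integral_comp_affine_eq_sum_fiber [IsFiniteMeasure P] {𝕏 : Type*} [Fintype 𝕏]
    [MeasurableSpace 𝕏] [MeasurableSingletonClass 𝕏] {X : Ω → 𝕏} (hX : Measurable X)
    {Y : Ω → ℝ} (hY : Integrable Y P) (G : 𝕏 → ℝ → ℝ)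
    (hG : ∀ x y, G x y = G x 0 + (G x 1 - G x 0) * y) :
    ∫ ω, G (X ω) (Y ω) ∂P = ∑ x, P.real (X ⁻¹' {x}) * G x (∫ ω, Y ω ∂P[|X ⁻¹' {x}]) := by
  have hfiber : ∀ x, MeasurableSet (X ⁻¹' {x}) := fun x => hX (measurableSet_singleton x)
  have hlin : ∀ x, Set.EqOn (fun ω => G (X ω) (Y ω)) (fun ω => G x 0 + (G x 1 - G x 0) * Y ω)
      (X ⁻¹' {x}) := fun x ω hω => by
    rw [Set.mem_preimage, Set.mem_singleton_iff] at hω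
    simp only [hω, ← hG]
  have hint : ∀ x, IntegrableOn (fun ω => G x 0 + (G x 1 - G x 0) * Y ω) (X ⁻¹' {x}) P :=
    fun x => (integrable_const _).add (hY.integrableOn.const_mul _)
  have hcover : (⋃ x, X ⁻¹' {x}) = Set.univ := by ext; simp
  rw [← setIntegral_univ, ← hcover, integral_iUnion_fintype hfiber (pairwise_disjoint_fiber X)
    fun x => (hint x).congr_fun (hlin x).symm (hfiber x)]
  refine sum_congr rfl fun x _ => ?_
  rw [setIntegral_congr_fun (hfiber x) (hlin x), integral_add (integrable_const _)
    (hY.integrableOn.const_mul _), setIntegral_const, integral_const_mul,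
    setIntegral_eq_measureReal_mul_integral_cond, hG x (∫ ω, Y ω ∂P[|X ⁻¹' {x}]), smul_eq_mul]
  ring

theorem toReal_cond_eq_div (s t : Set Ω) (ht : MeasurableSet t) :
    (P[t|s]).toReal = P.real (s ∩ t) / P.real s := by
  rw [cond_apply' ht, ENNReal.toReal_mul, ENNReal.toReal_inv, ← measureReal_def,
    ← measureReal_def, inv_mul_eq_div]

theorem measureReal_eq_sum_inter_setOf_eq [IsFiniteMeasure P] {ζ : Type*} [Fintype ζ]
    [MeasurableSpace ζ] [MeasurableSingletonClass ζ] {Z : Ω → ζ} (hZ : Measurable Z)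
    (E : Set Ω) : P.real E = ∑ z, P.real (E ∩ {ω | Z ω = z}) := by
  have := sum_measureReal_preimage_singleton (μ := P.restrict E) univ
    (fun z _ => hZ (measurableSet_singleton z))
  simp only [measureReal_restrict_apply (hZ (measurableSet_singleton _)), coe_univ,
    Set.preimage_univ, measureReal_restrict_apply_univ] at this
  rw [← this]
  exact sum_congr rfl fun z _ => by rw [Set.inter_comm]; rfl

section Cells

variable {𝔸 𝕄 𝕎 : Type*} {A : Ω → 𝔸} {M : Ω → 𝕄} {W : Ω → 𝕎}

variable (A M W) in
def cellMass (α : 𝔸) (m : 𝕄) (w : 𝕎) : ℝ := P.real {ω | A ω = α ∧ M ω = m ∧ W ω = w}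

theorem integral_comp_affine_eq_sum_cellMass [IsFiniteMeasure P]
    [Fintype 𝔸] [MeasurableSpace 𝔸] [MeasurableSingletonClass 𝔸]
    [Fintype 𝕄] [MeasurableSpace 𝕄] [MeasurableSingletonClass 𝕄]
    [Fintype 𝕎] [MeasurableSpace 𝕎] [MeasurableSingletonClass 𝕎]
    (hA : Measurable A) (hM : Measurable M) (hW : Measurable W) {Y : Ω → ℝ}
    (hY : Integrable Y P) (G : 𝔸 → 𝕄 → 𝕎 → ℝ → ℝ)
    (hG : ∀ α m w y, G α m w y = G α m w 0 + (G α m w 1 - G α m w 0) * y) :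
    ∫ ω, G (A ω) (M ω) (W ω) (Y ω) ∂P = ∑ w, ∑ m, ∑ α, cellMass P A M W α m w
      * G α m w (∫ ω, Y ω ∂P[|{ω | A ω = α ∧ M ω = m ∧ W ω = w}]) := by
  have hcell : ∀ w m α, (fun ω => (W ω, M ω, A ω)) ⁻¹' {(w, m, α)}
      = {ω | A ω = α ∧ M ω = m ∧ W ω = w} := fun w m α => by
    ext ω
    simp only [Set.mem_preimage, Set.mem_singleton_iff, Prod.mk.injEq, Set.mem_ofPred_eq]
    tauto
  have := integral_comp_affine_eq_sum_fiber P (hW.prodMk (hM.prodMk hA)) hY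
    (fun x => G x.2.2 x.2.1 x.1) fun x => hG _ _ _
  simpa only [Fintype.sum_prod_type, hcell, cellMass] using this

theorem integral_comp_eq_sum_cellMass [IsFiniteMeasure P]
    [Fintype 𝔸] [MeasurableSpace 𝔸] [MeasurableSingletonClass 𝔸]
    [Fintype 𝕄] [MeasurableSpace 𝕄] [MeasurableSingletonClass 𝕄]
    [Fintype 𝕎] [MeasurableSpace 𝕎] [MeasurableSingletonClass 𝕎]
    (hA : Measurable A) (hM : Measurable M) (hW : Measurable W) (g : 𝔸 → 𝕄 → 𝕎 → ℝ) :
    ∫ ω, g (A ω) (M ω) (W ω) ∂P = ∑ w, ∑ m, ∑ α, cellMass P A M W α m w * g α m w :=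
  integral_comp_affine_eq_sum_cellMass P hA hM hW (integrable_zero Ω ℝ P)
    (fun α m w _ => g α m w) fun _ _ _ _ => by ring

theorem measureReal_setOf_eq_sum_cellMass [IsFiniteMeasure P]
    [Fintype 𝔸] [MeasurableSpace 𝔸] [MeasurableSingletonClass 𝔸]
    [Fintype 𝕄] [MeasurableSpace 𝕄] [MeasurableSingletonClass 𝕄]
    (hA : Measurable A) (hM : Measurable M) (w : 𝕎) :
    P.real {ω | W ω = w} = ∑ m, ∑ α, cellMass P A M W α m w := by
  rw [measureReal_eq_sum_inter_setOf_eq P hM]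
  refine sum_congr rfl fun m _ => ?_
  rw [measureReal_eq_sum_inter_setOf_eq P hA]
  refine sum_congr rfl fun α _ => congrArg P.real ?_
  ext ω; simp only [Set.mem_inter_iff, Set.mem_ofPred_eq]; tauto

theorem toReal_cond_treatment_eq [IsFiniteMeasure P]
    [Fintype 𝔸] [MeasurableSpace 𝔸] [MeasurableSingletonClass 𝔸]
    [Fintype 𝕄] [MeasurableSpace 𝕄] [MeasurableSingletonClass 𝕄]
    (hA : Measurable A) (hM : Measurable M) (α : 𝔸) (w : 𝕎) :
    (P[{ω | A ω = α}|{ω | W ω = w}]).toReal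
      = (∑ m, cellMass P A M W α m w) / ∑ m, ∑ α, cellMass P A M W α m w := by
  rw [toReal_cond_eq_div P _ {ω | A ω = α} (hA (measurableSet_singleton α)),
    measureReal_setOf_eq_sum_cellMass P hA hM, measureReal_eq_sum_inter_setOf_eq P hM]
  refine congrArg (· / _) (sum_congr rfl fun m _ => congrArg P.real ?_)
  ext ω; simp only [Set.mem_inter_iff, Set.mem_ofPred_eq]; tauto

theorem toReal_cond_treatment_of_mediator_eq [IsFiniteMeasure P]
    [Fintype 𝔸] [MeasurableSpace 𝔸] [MeasurableSingletonClass 𝔸]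
    (hA : Measurable A) (α : 𝔸) (m : 𝕄) (w : 𝕎) :
    (P[{ω | A ω = α}|{ω | M ω = m ∧ W ω = w}]).toReal
      = cellMass P A M W α m w / ∑ α, cellMass P A M W α m w := by
  have hcell : ∀ α, {ω | M ω = m ∧ W ω = w} ∩ {ω | A ω = α}
      = {ω | A ω = α ∧ M ω = m ∧ W ω = w} := fun α => by
    ext ω; simp only [Set.mem_inter_iff, Set.mem_ofPred_eq]; tauto
  rw [toReal_cond_eq_div P _ {ω | A ω = α} (hA (measurableSet_singleton α)),
    measureReal_eq_sum_inter_setOf_eq P hA {ω | M ω = m ∧ W ω = w}]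
  simp only [hcell, cellMass]

theorem toReal_cond_mediator_eq [IsFiniteMeasure P]
    [Fintype 𝕄] [MeasurableSpace 𝕄] [MeasurableSingletonClass 𝕄]
    (hM : Measurable M) (α : 𝔸) (m : 𝕄) (w : 𝕎) :
    (P[{ω | M ω = m}|{ω | A ω = α ∧ W ω = w}]).toReal
      = cellMass P A M W α m w / ∑ m, cellMass P A M W α m w := by
  have hcell : ∀ m, {ω | A ω = α ∧ W ω = w} ∩ {ω | M ω = m}
      = {ω | A ω = α ∧ M ω = m ∧ W ω = w} := fun m => by
    ext ω; simp only [Set.mem_inter_iff, Set.mem_ofPred_eq]; tauto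
  rw [toReal_cond_eq_div P _ {ω | M ω = m} (hM (measurableSet_singleton m)),
    measureReal_eq_sum_inter_setOf_eq P hM {ω | A ω = α ∧ W ω = w}]
  simp only [hcell, cellMass]

end Cells

end FiniteValued

theorem aipw_second_order_remainder
    {Ω : Type*} [MeasurableSpace Ω] (P : Measure Ω) [IsProbabilityMeasure P]
    {𝕄 𝕎 : Type*} [Fintype 𝕄] [Nonempty 𝕄] [MeasurableSpace 𝕄] [MeasurableSingletonClass 𝕄]
    [Fintype 𝕎] [MeasurableSpace 𝕎] [MeasurableSingletonClass 𝕎]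
    (A : Ω → Bool) (M : Ω → 𝕄) (W : Ω → 𝕎)
    (hA : Measurable A) (hM : Measurable M) (hW : Measurable W)
    (positivity : ∀ (α : Bool) (m : 𝕄) (w : 𝕎),
      0 < P {ω | A ω = α ∧ M ω = m ∧ W ω = w})
    (a a' : Bool)
    (Y : Ω → ℝ) (hY_meas : Measurable Y) (hY_bdd : ∃ C : ℝ, ∀ ω, |Y ω| ≤ C)
    -- true nuisance functions
    (πA : Bool → 𝕎 → ℝ)
    (hπA : ∀ (α : Bool) (w : 𝕎), πA α w = ((P[|{ω | W ω = w}]) {ω | A ω = α}).toReal)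
    (πAM : Bool → 𝕄 → 𝕎 → ℝ)
    (hπAM : ∀ (α : Bool) (m : 𝕄) (w : 𝕎),
      πAM α m w = ((P[|{ω | M ω = m ∧ W ω = w}]) {ω | A ω = α}).toReal)
    (b : 𝕄 → 𝕎 → ℝ)
    (hb : ∀ (m : 𝕄) (w : 𝕎),
      b m w = ∫ ω, Y ω ∂(P[|{ω | A ω = a ∧ M ω = m ∧ W ω = w}]))
    (ξ : 𝕎 → ℝ)
    (hξ : ∀ w : 𝕎,
      ξ w = ∑ m : 𝕄, b m w * ((P[|{ω | A ω = a' ∧ W ω = w}]) {ω | M ω = m}).toReal)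
    (r : 𝕄 → 𝕎 → ℝ)
    (hr : ∀ (m : 𝕄) (w : 𝕎),
      r m w = (πAM a' m w * πA a w) / (πAM a m w * πA a' w))
    (ψ : ℝ) (hψ : ψ = ∑ w : 𝕎, (P {ω | W ω = w}).toReal * ξ w)
    -- estimated nuisance functions
    (πhat₀ πhat₁ : 𝕎 → ℝ)
    (bhat : 𝕄 → 𝕎 → ℝ) (ξhat : 𝕎 → ℝ)
    (rhat : 𝕄 → 𝕎 → ℝ)
    (κ : 𝕎 → ℝ)
    (hκ : ∀ w : 𝕎,
      κ w = ∑ m : 𝕄, bhat m w * ((P[|{ω | A ω = a' ∧ W ω = w}]) {ω | M ω = m}).toReal)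
    (Ψhat : ℝ)
    (hΨhat : Ψhat = ∫ ω,
        ((if A ω = a then (1 : ℝ) else 0) / πhat₀ (W ω)) * rhat (M ω) (W ω)
            * (Y ω - bhat (M ω) (W ω))
          + ((if A ω = a' then (1 : ℝ) else 0) / πhat₁ (W ω))
            * (bhat (M ω) (W ω) - ξhat (W ω))
          + ξhat (W ω) ∂P) :
    Ψhat - ψ
      = (∫ ω, ((if A ω = a then (1 : ℝ) else 0) / πhat₀ (W ω))
            * (rhat (M ω) (W ω) - r (M ω) (W ω))
            * (b (M ω) (W ω) - bhat (M ω) (W ω)) ∂P)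
        + (∫ ω, ((if A ω = a then (1 : ℝ) else 0) / πhat₀ (W ω)
              - (if A ω = a then (1 : ℝ) else 0) / πA a (W ω))
            * r (M ω) (W ω)
            * (b (M ω) (W ω) - bhat (M ω) (W ω)) ∂P)
        + (∫ ω, ((if A ω = a' then (1 : ℝ) else 0) / πhat₁ (W ω)
              - (if A ω = a' then (1 : ℝ) else 0) / πA a' (W ω))
            * (κ (W ω) - ξhat (W ω)) ∂P) := by
  obtain ⟨C, hC⟩ := hY_bdd
  have hY : Integrable Y P := Integrable.of_bound hY_meas.aestronglyMeasurable C (ae_of_all _ hC)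
  have hp : ∀ α m w, 0 < cellMass P A M W α m w := fun α m w =>
    ENNReal.toReal_pos (positivity α m w).ne' (measure_ne_top P _)
  rw [hΨhat, hψ, integral_comp_affine_eq_sum_cellMass P hA hM hW hY
      (fun α m w y => (if α = a then (1 : ℝ) else 0) / πhat₀ w * rhat m w * (y - bhat m w)
        + (if α = a' then (1 : ℝ) else 0) / πhat₁ w * (bhat m w - ξhat w) + ξhat w)
      fun _ _ _ _ => by ring,
    integral_comp_eq_sum_cellMass P hA hM hW fun α m w =>
      (if α = a then (1 : ℝ) else 0) / πhat₀ w * (rhat m w - r m w) * (b m w - bhat m w),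
    integral_comp_eq_sum_cellMass P hA hM hW fun α m w =>
      ((if α = a then (1 : ℝ) else 0) / πhat₀ w - (if α = a then (1 : ℝ) else 0) / πA a w)
        * r m w * (b m w - bhat m w),
    integral_comp_eq_sum_cellMass P hA hM hW fun α m w =>
      ((if α = a' then (1 : ℝ) else 0) / πhat₁ w - (if α = a' then (1 : ℝ) else 0) / πA a' w)
        * (κ w - ξhat w)]
  simp only [← measureReal_def, measureReal_setOf_eq_sum_cellMass P hA hM]
  rw [← sum_sub_distrib, ← sum_add_distrib, ← sum_add_distrib]
  refine sum_congr rfl fun w _ => stratum_remainder_identity (fun α m => cellMass P A M W α m w)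
    (fun α m => hp α m w) a a' (fun α m => ∫ ω, Y ω ∂P[|{ω | A ω = α ∧ M ω = m ∧ W ω = w}])
    _ _ _ _ (fun α => πA α w) (fun α m => πAM α m w) _ _ _ _ _ (fun m => (hb m w).symm)
    (fun α => (hπA α w).trans (toReal_cond_treatment_eq P hA hM α w))
    (fun α m => (hπAM α m w).trans (toReal_cond_treatment_of_mediator_eq P hA α m w))
    (fun m => hr m w)
    ((hξ w).trans (sum_congr rfl fun m _ => by rw [toReal_cond_mediator_eq P hM a' m w]))
    ((hκ w).trans (sum_congr rfl fun m _ => by rw [toReal_cond_mediator_eq P hM a' m w]))
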